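/- For all n ≥ 0 and all real x, y, ρ, q: H_n(x|q) = ∑_{i=0}^n [n choose i]_q ρ^{n-i} H_{n-i}(y|q) P_i(x|y,ρ,q), expressing q-Hermite polynomials in terms of Al-Salam–Chihara polynomials. -/

import Mathlib

noncomputable def qint (q : ℝ) (n : ℕ) : ℝ := ∑ i ∈ Finset.range n, q ^ i

noncomputable def qfact (q : ℝ) (n : ℕ) : ℝ := ∏ i ∈ Finset.range n, qint q (i + 1)

noncomputable def qPoch (a q : ℝ) (n : ℕ) : ℝ := ∏ i ∈ Finset.range n, (1 - a * q ^ i)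

/-- Gaussian binomial coefficient as a polynomial in `q`, via the Pascal-type recurrence. -/
noncomputable def qbinom (q : ℝ) : ℕ → ℕ → ℝ
  | _, 0 => 1
  | 0, _ + 1 => 0
  | n + 1, k + 1 => qbinom q n k + q ^ (k + 1) * qbinom q n (k + 1)

/-- Rescaled continuous q-Hermite polynomials `H_n(x|q)`. -/
noncomputable def qHermite (q x : ℝ) : ℕ → ℝ
  | 0 => 1
  | 1 => x
  | n + 2 => x * qHermite q x (n + 1) - qint q (n + 1) * qHermite q x n

/-- Chebyshev polynomials of the second kind. -/
noncomputable def Ucheb (x : ℝ) : ℕ → ℝ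
  | 0 => 1
  | 1 => 2 * x
  | n + 2 => 2 * x * Ucheb x (n + 1) - Ucheb x n

/-- Probabilist's Hermite polynomials. -/
noncomputable def He (x : ℝ) : ℕ → ℝ
  | 0 => 1
  | 1 => x
  | n + 2 => x * He x (n + 1) - (n + 1 : ℝ) * He x n

/-- Big q-Hermite polynomials `H_n(x|a,q)`. -/
noncomputable def bigH (q a x : ℝ) (n : ℕ) : ℝ :=
  ∑ i ∈ Finset.range (n + 1),
    qbinom q n i * q ^ (i.choose 2) * (-a) ^ i * qHermite q x (n - i)

/-- Al-Salam--Chihara polynomials `P_n(x|y,ρ,q)`. -/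
noncomputable def ASC (q x y ρ : ℝ) : ℕ → ℝ
  | 0 => 1
  | 1 => x - ρ * y
  | n + 2 =>
      (x - ρ * y * q ^ (n + 1)) * ASC q x y ρ (n + 1)
        - qint q (n + 1) * (1 - ρ ^ 2 * q ^ n) * ASC q x y ρ n

/-- Auxiliary polynomials `B_n(x|q)`. -/
noncomputable def Bpoly (q x : ℝ) : ℕ → ℝ
  | 0 => 1
  | 1 => -x
  | n + 2 => -q ^ (n + 1) * x * Bpoly q x (n + 1) + q ^ n * qint q (n + 1) * Bpoly q x n


/-! Both sides satisfy the three-term recurrence of `H_n(x|q)` with the same initial values. For the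
right-hand side, expand `x P_i` by the Al-Salam–Chihara recurrence, `ρ y H_m` by the q-Hermite
recurrence and `[n+2 choose i]_q` by the q-Pascal rule; what is left cancels by the absorption
identities `[k+1] [n+1 choose k+1] = [n+1] [n choose k] = [n+1-k] [n+1 choose k]`. -/

open Finset

section GaussianBinomial

variable (q : ℝ)

lemma qint_zero : qint q 0 = 0 := by simp [qint]

lemma qint_one : qint q 1 = 1 := by simp [qint]

lemma qint_add (a b : ℕ) : qint q (a + b) = qint q a + q ^ a * qint q b := by
  simp [qint, sum_range_add, mul_sum, pow_add]

lemma qbinom_zero_right (n : ℕ) : qbinom q n 0 = 1 := by cases n <;> rfl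

lemma qbinom_succ_succ (n k : ℕ) :
    qbinom q (n + 1) (k + 1) = qbinom q n k + q ^ (k + 1) * qbinom q n (k + 1) := rfl

lemma qbinom_eq_zero_of_lt : ∀ {n k : ℕ}, n < k → qbinom q n k = 0
  | 0, _ + 1, _ => rfl
  | n + 1, k + 1, h => by
    rw [qbinom_succ_succ, qbinom_eq_zero_of_lt (by omega : n < k),
      qbinom_eq_zero_of_lt (by omega : n < k + 1)]
    ring

lemma qint_succ_mul_qbinom_succ (n k : ℕ) :
    qint q (k + 1) * qbinom q n (k + 1) = qint q (n - k) * qbinom q n k := by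
  induction n generalizing k with
  | zero => simp [qbinom, qint_zero]
  | succ n ih =>
    cases k with
    | zero =>
      have ih₀ := ih 0
      have hn : qint q (1 + n) = qint q 1 + q ^ 1 * qint q n := qint_add q 1 n
      simp only [qbinom_succ_succ, qbinom_zero_right, zero_add, qint_one, Nat.sub_zero]
        at ih₀ hn ⊢
      rw [add_comm 1 n] at hn
      linear_combination q * ih₀ - hn
    | succ k =>
      have hk : qint q (k + 1 + 1) = qint q (k + 1) + q ^ (k + 1) * qint q 1 := qint_add q _ _
      rw [qint_one] at hk
      rw [qbinom_succ_succ, qbinom_succ_succ, Nat.add_sub_add_right]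
      rcases lt_or_ge k n with hkn | hkn
      · have hnk : qint q (1 + (n - (k + 1))) = qint q 1 + q ^ 1 * qint q (n - (k + 1)) :=
          qint_add q _ _
        rw [qint_one, show 1 + (n - (k + 1)) = n - k by omega] at hnk
        linear_combination q ^ (k + 2) * ih (k + 1) + ih k
          + qbinom q n (k + 1) * hk - q ^ (k + 1) * qbinom q n (k + 1) * hnk
      · rw [qbinom_eq_zero_of_lt q (by omega : n < k + 1),
          qbinom_eq_zero_of_lt q (by omega : n < k + 2), Nat.sub_eq_zero_of_le hkn, qint_zero]
        ring

lemma qint_succ_mul_qbinom_succ_succ (n k : ℕ) :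
    qint q (k + 1) * qbinom q (n + 1) (k + 1) = qint q (n + 1) * qbinom q n k := by
  rcases le_or_gt k n with hkn | hkn
  · have hn : qint q ((k + 1) + (n - k)) = qint q (k + 1) + q ^ (k + 1) * qint q (n - k) :=
      qint_add q _ _
    rw [show k + 1 + (n - k) = n + 1 by omega] at hn
    rw [qbinom_succ_succ]
    linear_combination q ^ (k + 1) * qint_succ_mul_qbinom_succ q n k - qbinom q n k * hn
  · rw [qbinom_eq_zero_of_lt q (by omega : n + 1 < k + 1), qbinom_eq_zero_of_lt q hkn]
    ring

lemma qint_sub_mul_qbinom_succ (n k : ℕ) :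
    qint q (n + 1 - k) * qbinom q (n + 1) k = qint q (n + 1) * qbinom q n k :=
  (qint_succ_mul_qbinom_succ q (n + 1) k).symm.trans (qint_succ_mul_qbinom_succ_succ q n k)

end GaussianBinomial

lemma ASC_succ (q x y ρ : ℝ) (i : ℕ) :
    ASC q x y ρ (i + 1) = (x - ρ * y * q ^ i) * ASC q x y ρ i
      - qint q i * (1 - ρ ^ 2 * q ^ (i - 1)) * ASC q x y ρ (i - 1) := by
  cases i with
  | zero => simp [ASC, qint_zero]
  | succ i => rw [ASC, Nat.add_sub_cancel]

theorem eq_qHermite_of_rec (q x : ℝ) (f : ℕ → ℝ) (h0 : f 0 = 1) (h1 : f 1 = x)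
    (h : ∀ n, f (n + 2) = x * f (n + 1) - qint q (n + 1) * f n) (n : ℕ) :
    f n = qHermite q x n := by
  induction n using Nat.twoStepInduction with
  | zero => rw [h0, qHermite]
  | one => rw [h1, qHermite]
  | more n ih₀ ih₁ => rw [h, ih₀, ih₁, qHermite]

noncomputable def ascCoeff (q y ρ : ℝ) (n i : ℕ) : ℝ :=
  qbinom q n i * ρ ^ (n - i) * qHermite q y (n - i)

noncomputable def ascSum (q x y ρ : ℝ) (n : ℕ) : ℝ :=
  ∑ i ∈ range (n + 1), ascCoeff q y ρ n i * ASC q x y ρ i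

section Expansion

variable (q x y ρ : ℝ)

lemma ascCoeff_succ_succ (n i : ℕ) :
    ascCoeff q y ρ (n + 2) (i + 1) = ascCoeff q y ρ (n + 1) i
      + q ^ (i + 1) * qbinom q (n + 1) (i + 1) * ρ ^ (n + 1 - i) * qHermite q y (n + 1 - i) := by
  simp only [ascCoeff, qbinom_succ_succ, show n + 2 - (i + 1) = n + 1 - i by omega]
  ring

lemma qint_mul_ascCoeff_succ_succ (n i : ℕ) :
    qint q (i + 1) * ascCoeff q y ρ (n + 1) (i + 1) = qint q (n + 1) * ascCoeff q y ρ n i := by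
  simp only [ascCoeff, Nat.add_sub_add_right]
  linear_combination ρ ^ (n - i) * qHermite q y (n - i) * qint_succ_mul_qbinom_succ_succ q n i

lemma mul_ascCoeff_succ (n i : ℕ) :
    ρ * y * q ^ i * ascCoeff q y ρ (n + 1) i
      = q ^ i * qbinom q (n + 1) i * ρ ^ (n + 2 - i) * qHermite q y (n + 2 - i)
        + qint q (n + 1) * (q ^ i * ρ ^ 2 * ascCoeff q y ρ n i) := by
  rcases le_or_gt i n with hi | hi
  · obtain ⟨d, rfl⟩ := Nat.exists_eq_add_of_le hi
    have hB := qint_sub_mul_qbinom_succ q (i + d) i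
    simp only [ascCoeff, show i + d + 1 - i = d + 1 by omega, show i + d + 2 - i = d + 2 by omega,
      Nat.add_sub_cancel_left] at hB ⊢
    rw [qHermite]
    linear_combination q ^ i * ρ ^ (d + 2) * qHermite q y d * hB
  · rcases (show i = n + 1 ∨ n + 1 < i by omega) with rfl | hi'
    · simp only [ascCoeff, tsub_self, show n + 2 - (n + 1) = 1 by omega, qbinom_eq_zero_of_lt q hi,
        qHermite, pow_zero, pow_one, mul_one]
      ring
    · simp [ascCoeff, qbinom_eq_zero_of_lt q hi, qbinom_eq_zero_of_lt q hi']

theorem ascSum_succ_succ_eq_sum (n : ℕ) :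
    ascSum q x y ρ (n + 2)
      = ∑ i ∈ range (n + 2), ascCoeff q y ρ (n + 1) i * ASC q x y ρ (i + 1)
        + ∑ i ∈ range (n + 2), ρ * y * q ^ i * ascCoeff q y ρ (n + 1) i * ASC q x y ρ i
        - qint q (n + 1)
          * ∑ i ∈ range (n + 1), q ^ i * ρ ^ 2 * ascCoeff q y ρ n i * ASC q x y ρ i := by
  have hpascal : ascSum q x y ρ (n + 2)
      = ∑ i ∈ range (n + 2), ascCoeff q y ρ (n + 1) i * ASC q x y ρ (i + 1)
        + ∑ i ∈ range (n + 2), q ^ i * qbinom q (n + 1) i * ρ ^ (n + 2 - i)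
            * qHermite q y (n + 2 - i) * ASC q x y ρ i := by
    have hsub (i : ℕ) : n + 2 - (i + 1) = n + 1 - i := by omega
    rw [ascSum, sum_range_succ' (fun i ↦ ascCoeff q y ρ (n + 2) i * ASC q x y ρ i),
      sum_range_succ' (fun i ↦ q ^ i * qbinom q (n + 1) i * ρ ^ (n + 2 - i)
        * qHermite q y (n + 2 - i) * ASC q x y ρ i)]
    simp only [ascCoeff_succ_succ, add_mul, sum_add_distrib, hsub]
    rw [sum_range_succ (fun i ↦ q ^ (i + 1) * qbinom q (n + 1) (i + 1) * ρ ^ (n + 1 - i)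
        * qHermite q y (n + 1 - i) * ASC q x y ρ (i + 1)),
      qbinom_eq_zero_of_lt q (Nat.lt_succ_self (n + 1))]
    simp only [ascCoeff, qbinom_zero_right, tsub_zero, pow_zero, mul_zero, zero_mul,
      add_zero, one_mul, mul_one]
    ring
  have hHermite :
      ∑ i ∈ range (n + 2), ρ * y * q ^ i * ascCoeff q y ρ (n + 1) i * ASC q x y ρ i
      = ∑ i ∈ range (n + 2), q ^ i * qbinom q (n + 1) i * ρ ^ (n + 2 - i)
            * qHermite q y (n + 2 - i) * ASC q x y ρ i
        + qint q (n + 1)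
          * ∑ i ∈ range (n + 1), q ^ i * ρ ^ 2 * ascCoeff q y ρ n i * ASC q x y ρ i := by
    have hlast : ascCoeff q y ρ n (n + 1) = 0 := by
      rw [ascCoeff, qbinom_eq_zero_of_lt q (Nat.lt_succ_self n)]
      ring
    simp only [mul_ascCoeff_succ, add_mul, sum_add_distrib]
    rw [sum_range_succ
      (fun i ↦ qint q (n + 1) * (q ^ i * ρ ^ 2 * ascCoeff q y ρ n i) * ASC q x y ρ i), hlast]
    simp only [mul_zero, zero_mul, add_zero, mul_sum, mul_assoc]
  rw [hpascal, hHermite]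
  ring

theorem mul_ascSum_succ_eq_sum (n : ℕ) :
    x * ascSum q x y ρ (n + 1)
      = ∑ i ∈ range (n + 2), ascCoeff q y ρ (n + 1) i * ASC q x y ρ (i + 1)
        + ∑ i ∈ range (n + 2), ρ * y * q ^ i * ascCoeff q y ρ (n + 1) i * ASC q x y ρ i
        + qint q (n + 1) * ∑ i ∈ range (n + 1),
            (1 - ρ ^ 2 * q ^ i) * ascCoeff q y ρ n i * ASC q x y ρ i := by
  have hx (i : ℕ) : x * (ascCoeff q y ρ (n + 1) i * ASC q x y ρ i)
      = ascCoeff q y ρ (n + 1) i * ASC q x y ρ (i + 1)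
        + ρ * y * q ^ i * ascCoeff q y ρ (n + 1) i * ASC q x y ρ i
        + qint q i * ascCoeff q y ρ (n + 1) i * (1 - ρ ^ 2 * q ^ (i - 1))
          * ASC q x y ρ (i - 1) := by
    rw [ASC_succ]
    ring
  rw [ascSum, mul_sum]
  simp only [hx, sum_add_distrib]
  rw [sum_range_succ' (fun i ↦ qint q i * ascCoeff q y ρ (n + 1) i * (1 - ρ ^ 2 * q ^ (i - 1))
    * ASC q x y ρ (i - 1))]
  simp only [qint_zero, zero_mul, add_zero, Nat.add_sub_cancel, mul_sum]
  congr 1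
  refine sum_congr rfl fun i _ ↦ ?_
  linear_combination (1 - ρ ^ 2 * q ^ i) * ASC q x y ρ i * qint_mul_ascCoeff_succ_succ q y ρ n i

lemma ascSum_zero : ascSum q x y ρ 0 = 1 := by
  simp [ascSum, ascCoeff, qbinom_zero_right, qHermite, ASC]

lemma ascSum_one : ascSum q x y ρ 1 = x := by
  simp [ascSum, sum_range_succ, ascCoeff, qbinom, qHermite, ASC]

theorem ascSum_succ_succ (n : ℕ) :
    ascSum q x y ρ (n + 2) = x * ascSum q x y ρ (n + 1) - qint q (n + 1) * ascSum q x y ρ n := by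
  have hsplit : ascSum q x y ρ n
      = ∑ i ∈ range (n + 1), q ^ i * ρ ^ 2 * ascCoeff q y ρ n i * ASC q x y ρ i
        + ∑ i ∈ range (n + 1), (1 - ρ ^ 2 * q ^ i) * ascCoeff q y ρ n i * ASC q x y ρ i := by
    rw [ascSum, ← sum_add_distrib]
    exact sum_congr rfl fun i _ ↦ by ring
  rw [ascSum_succ_succ_eq_sum, mul_ascSum_succ_eq_sum, hsplit]
  ring

end Expansion

theorem qHermite_eq_sum_H_ASC (q x y ρ : ℝ) (n : ℕ) :
    qHermite q x n =
      ∑ i ∈ Finset.range (n + 1),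
        qbinom q n i * ρ ^ (n - i) * qHermite q y (n - i) * ASC q x y ρ i :=
  (eq_qHermite_of_rec q x _ (ascSum_zero q x y ρ) (ascSum_one q x y ρ)
    (ascSum_succ_succ q x y ρ) n).symm
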